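/- arXiv:1812.00826 — 4 statements merged into one kernel-verified Lean document; each statement's English description precedes it below -/
import Mathlib

section
/- Let V be an n-dimensional real inner product space with orientation o (n ≥ 1), and let ω be the volume form of o. Define cross : V^{n-1} → V by letting cross(v₁,…,v_{n-1}) be the unique vector w ∈ V such that ⟨w, u⟩ = ω(v₁,…,v_{n-1}, u) for all u ∈ V. Then cross is an (n-1)-fold vector cross product on V, i.e., it is multilinear and satisfies ⟨cross(v₁,…,v_{n-1}), vᵢ⟩ = 0 for all 1 ≤ i ≤ n-1, and ⟨cross(v₁,…,v_{n-1}), cross(v₁,…,v_{n-1})⟩ = det(⟨vᵢ,vⱼ⟩)_{i,j=1}^{n-1}. -/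
/-!
Multilinearity of `cross` only uses that `ω` is multilinear, and `cross v ⟂ vᵢ` that it is
alternating. For the norm, writing vectors in a positive orthonormal basis gives
`ω(w)² = det ⟪wᵢ, wⱼ⟫`. For `w = (v, cross v)` the last row of this Gram matrix is
`(0, …, 0, ‖cross v‖²)`, so `‖cross v‖⁴ = ‖cross v‖² · det ⟪vᵢ, vⱼ⟫`. If `cross v = 0` then
`ω(v, ·) = 0`, so `v` extends to no basis, is linearly dependent, and its Gram determinant vanishes.
-/

open scoped RealInnerProductSpace
open Matrix Module

theorem Matrix.det_gram_snoc_of_inner_eq_zero {𝕜 E : Type*} [CommRing 𝕜] [Inner 𝕜 E] {m : ℕ}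
    (v : Fin m → E) {u : E} (hu : ∀ i, inner 𝕜 u (v i) = 0) :
    (gram 𝕜 (Fin.snoc v u : Fin (m + 1) → E)).det = inner 𝕜 u u * (gram 𝕜 v).det := by
  rw [det_succ_row _ (Fin.last m), Fin.sum_univ_castSucc]
  have hsub : (gram 𝕜 (Fin.snoc v u : Fin (m + 1) → E)).submatrix
      Fin.castSucc Fin.castSucc = gram 𝕜 v := by
    ext i j
    simp
  simp [hu, hsub]

section RieszRepresentative

variable {E : Type*} [NormedAddCommGroup E] [InnerProductSpace ℝ E] {m : ℕ}
  {cross : (Fin m → E) → E}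

theorem update_add_of_inner_eq_snoc {f : MultilinearMap ℝ (fun _ : Fin (m + 1) ↦ E) ℝ}
    (hcross : ∀ v u, ⟪cross v, u⟫ = f (Fin.snoc v u)) (v : Fin m → E) (i : Fin m) (x y : E) :
    cross (Function.update v i (x + y))
      = cross (Function.update v i x) + cross (Function.update v i y) :=
  ext_inner_right ℝ fun u ↦ by
    simp only [inner_add_left, hcross, Fin.snoc_update, f.map_update_add]

theorem update_smul_of_inner_eq_snoc {f : MultilinearMap ℝ (fun _ : Fin (m + 1) ↦ E) ℝ}
    (hcross : ∀ v u, ⟪cross v, u⟫ = f (Fin.snoc v u)) (v : Fin m → E) (i : Fin m) (c : ℝ)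
    (x : E) : cross (Function.update v i (c • x)) = c • cross (Function.update v i x) :=
  ext_inner_right ℝ fun u ↦ by
    simp only [real_inner_smul_left, hcross, Fin.snoc_update, f.map_update_smul, smul_eq_mul]

theorem inner_apply_eq_zero_of_inner_eq_snoc {ω : E [⋀^Fin (m + 1)]→ₗ[ℝ] ℝ}
    (hcross : ∀ v u, ⟪cross v, u⟫ = ω (Fin.snoc v u)) (v : Fin m → E) (i : Fin m) :
    ⟪cross v, v i⟫ = 0 := by
  rw [hcross]
  exact ω.map_eq_zero_of_eq _ (by simp) (Fin.castSucc_lt_last i).ne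

end RieszRepresentative

namespace Orientation

variable {E : Type*} [NormedAddCommGroup E] [InnerProductSpace ℝ E]

theorem volumeForm_sq {n : ℕ} [Fact (finrank ℝ E = n)] (o : Orientation ℝ E (Fin n))
    (w : Fin n → E) : o.volumeForm w ^ 2 = (gram ℝ w).det := by
  cases n with
  | zero => rcases o.eq_or_eq_neg_of_isEmpty with rfl | rfl <;> simp
  | succ n =>
    have : FiniteDimensional ℝ E := .of_fact_finrank_eq_succ n
    let b : OrthonormalBasis (Fin (n + 1)) ℝ E :=
      (stdOrthonormalBasis ℝ E).reindex (finCongr Fact.out)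
    rw [← sq_abs, o.volumeForm_robust' b, sq_abs, b.toBasis.det_apply,
      gram_eq_conjTranspose_mul b, det_mul, det_conjTranspose, star_trivial, sq]
    rfl

theorem volumeForm_ne_zero_iff {n : ℕ} [Fact (finrank ℝ E = n)] (o : Orientation ℝ E (Fin n))
    (w : Fin n → E) : o.volumeForm w ≠ 0 ↔ LinearIndependent ℝ w := by
  rw [← pow_ne_zero_iff two_ne_zero, volumeForm_sq, det_gram_ne_zero_iff_linearIndependent]

theorem exists_volumeForm_snoc_ne_zero {m : ℕ} [Fact (finrank ℝ E = m + 1)]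
    (o : Orientation ℝ E (Fin (m + 1))) {v : Fin m → E} (hv : LinearIndependent ℝ v) :
    ∃ u, o.volumeForm (Fin.snoc v u) ≠ 0 := by
  obtain ⟨u, hu⟩ := exists_linearIndependent_snoc_of_lt_finrank hv
    (Fact.out (p := finrank ℝ E = m + 1) ▸ m.lt_succ_self)
  exact ⟨u, (o.volumeForm_ne_zero_iff _).mpr hu⟩

theorem inner_self_eq_det_gram_of_inner_eq_snoc {m : ℕ} [Fact (finrank ℝ E = m + 1)]
    (o : Orientation ℝ E (Fin (m + 1))) {cross : (Fin m → E) → E}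
    (hcross : ∀ v u, ⟪cross v, u⟫ = o.volumeForm (Fin.snoc v u)) (v : Fin m → E) :
    ⟪cross v, cross v⟫ = (gram ℝ v).det := by
  have hsq : ⟪cross v, cross v⟫ ^ 2 = ⟪cross v, cross v⟫ * (gram ℝ v).det := by
    rw [← det_gram_snoc_of_inner_eq_zero v (inner_apply_eq_zero_of_inner_eq_snoc hcross v),
      ← o.volumeForm_sq, hcross]
  rcases eq_or_ne (cross v) 0 with h0 | h0
  · rw [h0, inner_zero_left, eq_comm]
    by_contra hdet
    obtain ⟨u, hu⟩ :=
      o.exists_volumeForm_snoc_ne_zero (linearIndependent_of_det_gram_ne_zero hdet)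
    exact hu (by rw [← hcross, h0, inner_zero_left])
  · exact mul_left_cancel₀ (inner_self_ne_zero.mpr h0) (by rw [← sq, hsq])

end Orientation

/-- On an oriented real inner product space `V` of dimension `n = m + 1 ≥ 1` with volume
form `ω`, the map `cross` defined by `⟪cross v, u⟫ = ω (v₁, …, v_{n-1}, u)` is an
`(n-1)`-fold vector cross product: it is multilinear, orthogonal to each of its
arguments, and its squared norm is the Gram determinant of its arguments. -/
theorem cross_of_volumeForm_is_vector_cross_product
    {V : Type*} [NormedAddCommGroup V] [InnerProductSpace ℝ V]
    {m : ℕ} [Fact (Module.finrank ℝ V = m + 1)]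
    (o : Orientation ℝ V (Fin (m + 1)))
    (cross : (Fin m → V) → V)
    (hcross : ∀ (v : Fin m → V) (u : V),
      ⟪cross v, u⟫ = o.volumeForm (Fin.snoc v u)) :
    (∀ (v : Fin m → V) (i : Fin m) (x y : V),
        cross (Function.update v i (x + y))
          = cross (Function.update v i x) + cross (Function.update v i y)) ∧
    (∀ (v : Fin m → V) (i : Fin m) (c : ℝ) (x : V),
        cross (Function.update v i (c • x)) = c • cross (Function.update v i x)) ∧
    (∀ (v : Fin m → V) (i : Fin m), ⟪cross v, v i⟫ = 0) ∧
    (∀ v : Fin m → V,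
        ⟪cross v, cross v⟫ = Matrix.det (Matrix.of fun i j : Fin m => ⟪v i, v j⟫)) :=
  ⟨update_add_of_inner_eq_snoc (f := o.volumeForm.toMultilinearMap) hcross,
    update_smul_of_inner_eq_snoc (f := o.volumeForm.toMultilinearMap) hcross,
    inner_apply_eq_zero_of_inner_eq_snoc hcross,
    Orientation.inner_self_eq_det_gram_of_inner_eq_snoc o hcross⟩
end

section
/- Let V be an n-dimensional oriented real inner product space. If X₁ and X₂ are both positively oriented (n-1)-fold vector cross products on V, then X₁ = X₂, i.e., X₁(v₁,…,v_{n-1}) = X₂(v₁,…,v_{n-1}) for all v₁,…,v_{n-1} ∈ V. -/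
/-!
Both values are orthogonal to `v₁, …, v_{n-1}` and have squared norm the Gram determinant. If the
`vᵢ` are dependent, that determinant vanishes, so both values are `0`. Otherwise the orthogonal
complement of their span is a line, so `X₂ v = ± X₁ v`, and the orientation condition rules out
the minus sign, since negating the last vector flips the sign of the volume form.
-/

open Module Submodule
open scoped RealInnerProductSpace

theorem AlternatingMap.map_snoc_neg {R M N : Type*} [CommRing R] [AddCommGroup M] [Module R M]
    [AddCommGroup N] [Module R N] {m : ℕ} (f : M [⋀^Fin (m + 1)]→ₗ[R] N) (v : Fin m → M)
    (x : M) : f (Fin.snoc v (-x)) = -f (Fin.snoc v x) := by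
  have := f.map_update_neg (Fin.snoc v x) (Fin.last m) x
  rwa [Fin.update_snoc_last, Fin.update_snoc_last] at this

section InnerProductSpace

variable {V : Type*} [NormedAddCommGroup V] [InnerProductSpace ℝ V]

theorem mem_orthogonal_span_range_of_forall_inner_eq_zero {ι : Type*} {v : ι → V} {x : V}
    (h : ∀ i, ⟪x, v i⟫ = 0) : x ∈ (span ℝ (Set.range v))ᗮ :=
  isOrtho_span.mpr (by rintro _ rfl _ ⟨i, rfl⟩; exact h i) (mem_span_singleton_self x)

theorem finrank_orthogonal_span_range_eq_one {m : ℕ} [Fact (finrank ℝ V = m + 1)]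
    {v : Fin m → V} (hv : LinearIndependent ℝ v) : finrank ℝ (span ℝ (Set.range v))ᗮ = 1 := by
  have : FiniteDimensional ℝ V := .of_fact_finrank_eq_succ m
  have := (span ℝ (Set.range v)).finrank_add_finrank_orthogonal
  rw [finrank_span_eq_card hv, Fintype.card_fin, Fact.out (p := finrank ℝ V = m + 1)] at this
  omega

theorem eq_or_eq_neg_of_norm_eq_of_finrank_eq_one {K : Submodule ℝ V} (hK : finrank ℝ K = 1)
    {x y : V} (hx : x ∈ K) (hy : y ∈ K) (h : ‖x‖ = ‖y‖) : y = x ∨ y = -x := by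
  rcases eq_or_ne x 0 with rfl | hx0
  · exact .inl (norm_eq_zero.mp (h.symm.trans norm_zero))
  obtain ⟨c, hc⟩ :=
    (finrank_eq_one_iff_of_nonzero' (⟨x, hx⟩ : K) (by simpa using hx0)).mp hK ⟨y, hy⟩
  replace hc : c • x = y := congrArg Subtype.val hc
  have hc1 : |c| = 1 := by
    rw [← hc, norm_smul, Real.norm_eq_abs] at h
    exact (mul_eq_right₀ (norm_ne_zero_iff.mpr hx0)).mp h.symm
  rcases (abs_eq zero_le_one).mp hc1 with rfl | rfl
  · exact .inl (by rw [← hc, one_smul])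
  · exact .inr (by rw [← hc, neg_one_smul])

theorem eq_or_eq_neg_of_forall_inner_eq_zero {m : ℕ} [Fact (finrank ℝ V = m + 1)]
    {v : Fin m → V} (hv : LinearIndependent ℝ v) {x y : V} (hx : ∀ i, ⟪x, v i⟫ = 0)
    (hy : ∀ i, ⟪y, v i⟫ = 0) (h : ‖x‖ = ‖y‖) : y = x ∨ y = -x :=
  eq_or_eq_neg_of_norm_eq_of_finrank_eq_one (finrank_orthogonal_span_range_eq_one hv)
    (mem_orthogonal_span_range_of_forall_inner_eq_zero hx)
    (mem_orthogonal_span_range_of_forall_inner_eq_zero hy) h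

theorem eq_zero_of_inner_self_eq_det_gram {ι : Type*} [Fintype ι] [DecidableEq ι] {v : ι → V}
    (hv : ¬ LinearIndependent ℝ v) {x : V} (hx : ⟪x, x⟫ = (Matrix.gram ℝ v).det) : x = 0 := by
  rw [← Matrix.det_gram_ne_zero_iff_linearIndependent, not_not] at hv
  exact inner_self_eq_zero.mp (hx.trans hv)

end InnerProductSpace

/-- Uniqueness of the positively oriented `(n-1)`-fold vector cross product on an
oriented real inner product space of dimension `n = m + 1`.  A vector cross product is a
multilinear map orthogonal to each of its arguments whose squared norm is the Gram
determinant of its arguments; it is positively oriented if appending its value to any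
linearly independent tuple of arguments yields a positively oriented basis (equivalently,
the volume form is positive on the resulting tuple). -/
theorem positively_oriented_vcp_unique
    {V : Type*} [NormedAddCommGroup V] [InnerProductSpace ℝ V]
    {m : ℕ} [Fact (Module.finrank ℝ V = m + 1)]
    (o : Orientation ℝ V (Fin (m + 1)))
    (X₁ X₂ : MultilinearMap ℝ (fun _ : Fin m => V) V)
    (horth₁ : ∀ (v : Fin m → V) (i : Fin m), ⟪X₁ v, v i⟫ = 0)
    (hnorm₁ : ∀ v : Fin m → V,
      ⟪X₁ v, X₁ v⟫ = Matrix.det (Matrix.of fun i j : Fin m => ⟪v i, v j⟫))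
    (hpos₁ : ∀ v : Fin m → V, LinearIndependent ℝ v →
      0 < o.volumeForm (Fin.snoc v (X₁ v)))
    (horth₂ : ∀ (v : Fin m → V) (i : Fin m), ⟪X₂ v, v i⟫ = 0)
    (hnorm₂ : ∀ v : Fin m → V,
      ⟪X₂ v, X₂ v⟫ = Matrix.det (Matrix.of fun i j : Fin m => ⟪v i, v j⟫))
    (hpos₂ : ∀ v : Fin m → V, LinearIndependent ℝ v →
      0 < o.volumeForm (Fin.snoc v (X₂ v))) :
    ∀ v : Fin m → V, X₁ v = X₂ v := by
  intro v
  by_cases hv : LinearIndependent ℝ v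
  · have hnorm : ‖X₁ v‖ = ‖X₂ v‖ := by
      rw [norm_eq_sqrt_real_inner, norm_eq_sqrt_real_inner, hnorm₁, hnorm₂]
    rcases eq_or_eq_neg_of_forall_inner_eq_zero hv (horth₁ v) (horth₂ v) hnorm with h | h
    · exact h.symm
    · have h₂ := hpos₂ v hv
      rw [h, o.volumeForm.map_snoc_neg] at h₂
      linarith [hpos₁ v hv]
  · rw [eq_zero_of_inner_self_eq_det_gram hv (hnorm₁ v),
      eq_zero_of_inner_self_eq_det_gram hv (hnorm₂ v)]
end

section
/- Let V be an m-dimensional oriented real inner product space (m ≥ 2) with positively oriented orthonormal basis (E₁,…,E_m), and let cross denote the positively oriented (m-1)-fold vector cross product on V. Let Z ∈ V satisfy ⟨Z, E₁⟩ ≠ 0, and for 1 ≤ j ≤ m-1 set Xⱼ(Z) = cross(Z, E₂, …, E_{m-j}, E_{m-j+2}, …, E_m) (the arguments after Z being E₂,…,E_m with E_{m-j+1} omitted). Then the m vectors E₁, X₁(Z), …, X_{m-1}(Z) are linearly independent. -/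
/-!
Pair the family against `E 0, E (m - 1), …, E 1`. For `k ≥ 1`, `⟪X k, E i⟫` is the volume form
of `(Z, E 1, …, E (m - 1))` with `E (m - k)` replaced by `E i`; it vanishes when `E i` already
occurs among the arguments, i.e. unless `i ∈ {0, m - k}`, and for `i = m - k` the arguments
other than `Z` form an orthonormal basis in which `E 0` sits in the slot of `Z`, so the value is
`±⟪Z, E 0⟫ ≠ 0`. Hence the pairing matrix is lower triangular with nonzero diagonal.
-/

open scoped RealInnerProductSpace

theorem LinearIndependent.of_triangular_dual {ι R M : Type*} [Fintype ι] [LinearOrder ι]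
    [CommRing R] [IsDomain R] [AddCommGroup M] [Module R M] {v : ι → M} (f : ι → Module.Dual R M)
    (hdiag : ∀ i, f i (v i) ≠ 0) (htri : ∀ i j, i < j → f j (v i) = 0) :
    LinearIndependent R v := by
  let A : Matrix ι ι R := Matrix.of fun i j => f j (v i)
  have hA : A.det ≠ 0 := by
    rw [Matrix.det_of_isLowerTriangular A fun i j hij => htri i j hij]
    exact Finset.prod_ne_zero_iff.2 fun i _ => hdiag i
  exact LinearIndependent.of_comp (LinearMap.pi f) (Matrix.linearIndependent_rows_of_det_ne_zero hA)

theorem AlternatingMap.map_snoc_self {R M N : Type*} [Semiring R] [AddCommMonoid M] [Module R M]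
    [AddCommMonoid N] [Module R N] {n : ℕ} (f : M [⋀^Fin (n + 1)]→ₗ[R] N) (v : Fin n → M)
    (l : Fin n) : f (Fin.snoc v (v l)) = 0 :=
  f.map_eq_zero_of_eq _ (by rw [Fin.snoc_castSucc, Fin.snoc_last]) (Fin.castSucc_lt_last l).ne

namespace Orientation

variable {V : Type*} [NormedAddCommGroup V] [InnerProductSpace ℝ V] {n : ℕ}
  [Fact (Module.finrank ℝ V = n)] (o : Orientation ℝ V (Fin n))

theorem volumeForm_update_of_orthonormal {b : Fin n → V} (hb : Orthonormal ℝ b) (i : Fin n)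
    (z : V) : o.volumeForm (Function.update b i z) = ⟪b i, z⟫ * o.volumeForm b := by
  have : Nonempty (Fin n) := ⟨i⟩
  let B := basisOfOrthonormalOfCardEqFinrank hb (by simpa using (Fact.out : _ = n).symm)
  have key : o.volumeForm.toMultilinearMap.toLinearMap b i =
      o.volumeForm b • (innerₛₗ ℝ (b i)) := by
    refine B.ext fun k => ?_
    simp only [coe_basisOfOrthonormalOfCardEqFinrank, B, MultilinearMap.toLinearMap_apply,
      AlternatingMap.coe_multilinearMap, LinearMap.smul_apply, innerₛₗ_apply_apply, smul_eq_mul]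
    rcases eq_or_ne k i with rfl | hki
    · simp [hb.1 k]
    · rw [orthonormal_iff_ite.1 hb, if_neg hki.symm, mul_zero]
      exact o.volumeForm.map_eq_zero_of_eq _ (by simp [Function.update_of_ne hki]) hki.symm
  simpa [mul_comm] using LinearMap.congr_fun key z

theorem volumeForm_ne_zero_of_orthonormal {b : Fin n → V} (hb : Orthonormal ℝ b) :
    o.volumeForm b ≠ 0 := by
  have := o.abs_volumeForm_apply_of_pairwise_orthogonal fun i j hij => hb.2 hij
  simp only [hb.1, Finset.prod_const_one] at this
  exact abs_ne_zero.1 (by rw [this]; exact one_ne_zero)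

end Orientation

section CrossFields

variable {V : Type*} {n : ℕ}

/-- The arguments of the cross field `Xⱼ` for `p = m - j` (0-based): `Z`, then
`E 1, …, E n` with `E p` omitted. -/
def crossFieldArgs (E : Fin (n + 1) → V) (Z : V) (p : ℕ) : Fin n → V :=
  fun i => if (i : ℕ) = 0 then Z else E ⟨if (i : ℕ) < p then i else i + 1, by split <;> omega⟩

theorem mem_range_crossFieldArgs (E : Fin (n + 1) → V) (Z : V) {p : ℕ} (hp : 1 ≤ p)
    (hpn : p ≤ n) {k : Fin (n + 1)} (hk0 : (k : ℕ) ≠ 0) (hkp : (k : ℕ) ≠ p) :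
    E k ∈ Set.range (crossFieldArgs E Z p) := by
  refine ⟨⟨if (k : ℕ) < p then k else k - 1, by split <;> omega⟩, ?_⟩
  simp only [crossFieldArgs]
  rw [if_neg (by split <;> omega)]
  congr 1
  ext
  split_ifs <;> simp only <;> omega

theorem AlternatingMap.map_snoc_crossFieldArgs_of_ne {R N : Type*} [Semiring R]
    [AddCommMonoid V] [Module R V] [AddCommMonoid N] [Module R N]
    (f : V [⋀^Fin (n + 1)]→ₗ[R] N) (E : Fin (n + 1) → V) (Z : V) {p : ℕ} (hp : 1 ≤ p)
    (hpn : p ≤ n) {k : Fin (n + 1)} (hk0 : (k : ℕ) ≠ 0) (hkp : (k : ℕ) ≠ p) :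
    f (Fin.snoc (crossFieldArgs E Z p) (E k)) = 0 := by
  obtain ⟨l, hl⟩ := mem_range_crossFieldArgs E Z hp hpn hk0 hkp
  rw [← hl]
  exact f.map_snoc_self _ _

theorem exists_snoc_crossFieldArgs_eq_update (E : Fin (n + 1) → V) (Z : V) {p : ℕ}
    (hp : 1 ≤ p) (hpn : p ≤ n) :
    ∃ τ : Fin (n + 1) → Fin (n + 1), Function.Injective τ ∧ τ 0 = 0 ∧
      Fin.snoc (crossFieldArgs E Z p) (E ⟨p, by omega⟩) = Function.update (E ∘ τ) 0 Z := by
  refine ⟨fun s => ⟨if (s : ℕ) = n then p else if (s : ℕ) = 0 then 0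
      else if (s : ℕ) < p then s else s + 1, by split_ifs <;> omega⟩, ?_, ?_, ?_⟩
  · intro a b h
    simp only [Fin.ext_iff] at h ⊢
    split_ifs at h <;> omega
  · ext
    simp only [Fin.val_zero]
    split_ifs <;> omega
  · funext s
    refine Fin.lastCases ?_ (fun i => ?_) s
    · rw [Fin.snoc_last, Function.update_of_ne (by simp [Fin.ext_iff]; omega)]
      simp
    · rw [Fin.snoc_castSucc]
      simp only [crossFieldArgs, Function.update_apply, Function.comp_apply, Fin.ext_iff,
        Fin.val_castSucc, Fin.val_zero]
      split_ifs <;> first | rfl | omega | (congr 1; ext; simp only; split_ifs <;> omega)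

variable [NormedAddCommGroup V] [InnerProductSpace ℝ V]

theorem volumeForm_snoc_crossFieldArgs_ne_zero [Fact (Module.finrank ℝ V = n + 1)]
    (o : Orientation ℝ V (Fin (n + 1))) {E : Fin (n + 1) → V} (hE : Orthonormal ℝ E) {Z : V}
    (hZ : ⟪Z, E 0⟫ ≠ 0) {p : ℕ} (hp : 1 ≤ p) (hpn : p ≤ n) :
    o.volumeForm (Fin.snoc (crossFieldArgs E Z p) (E ⟨p, by omega⟩)) ≠ 0 := by
  obtain ⟨τ, hτ, hτ0, h⟩ := exists_snoc_crossFieldArgs_eq_update E Z hp hpn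
  rw [h, o.volumeForm_update_of_orthonormal (hE.comp τ hτ)]
  refine mul_ne_zero ?_ (o.volumeForm_ne_zero_of_orthonormal (hE.comp τ hτ))
  rwa [Function.comp_apply, hτ0, real_inner_comm]

end CrossFields

/-- Let `(E₁, …, E_m)` be a positively oriented orthonormal basis of an `m`-dimensional
oriented real inner product space (`m ≥ 2`; the dimension is written `m - 1 + 1`),
`cross` the positively oriented `(m-1)`-fold vector cross product, and `Z ∈ V` with
`⟪Z, E₁⟫ ≠ 0`.  For `1 ≤ j ≤ m - 1` let
`Xⱼ = cross (Z, E₂, …, Ẽ_{m-j+1}, …, E_m)` (with `E_{m-j+1}` omitted).  Then the `m`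
vectors `E₁, X₁, …, X_{m-1}` are linearly independent.  (Indices are 0-based as in the
argument tuple: slot `i ≥ 1` holds `E ⟨i⟩` if `i < m - j` and `E ⟨i+1⟩` otherwise.) -/
theorem E₁_with_cross_fields_linearIndependent
    {V : Type*} [NormedAddCommGroup V] [InnerProductSpace ℝ V]
    {m : ℕ} [Fact (Module.finrank ℝ V = m - 1 + 1)]
    (o : Orientation ℝ V (Fin (m - 1 + 1)))
    (E : OrthonormalBasis (Fin (m - 1 + 1)) ℝ V)
    (cross : (Fin (m - 1) → V) → V)
    (hcross : ∀ (v : Fin (m - 1) → V) (u : V),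
      ⟪cross v, u⟫ = o.volumeForm (Fin.snoc v u))
    (Z : V) (hZ : ⟪Z, E ⟨0, by omega⟩⟫ ≠ 0)
    (X : ℕ → V)
    (hX : ∀ j, 1 ≤ j → j ≤ m - 1 →
      X j = cross (fun i : Fin (m - 1) =>
        if h : (i : ℕ) = 0 then Z
        else E ⟨if (i : ℕ) < m - j then (i : ℕ) else (i : ℕ) + 1,
          by split <;> omega⟩)) :
    LinearIndependent ℝ (fun k : Fin (m - 1 + 1) =>
      if (k : ℕ) = 0 then E ⟨0, by omega⟩ else X (k : ℕ)) := by
  have hXk : ∀ k : Fin (m - 1 + 1), (k : ℕ) ≠ 0 → X k = cross (crossFieldArgs E Z (m - k)) :=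
    fun k hk => hX k (by omega) (by omega)
  refine LinearIndependent.of_triangular_dual
    (fun l => innerₛₗ ℝ (E ⟨if (l : ℕ) = 0 then 0 else m - l, by split <;> omega⟩))
    (fun k => ?_) (fun k l hkl => ?_)
  · by_cases hk : (k : ℕ) = 0
    · simp [hk, E.orthonormal.1]
    · simp only [hk, if_false, innerₛₗ_apply_apply]
      rw [hXk k hk, real_inner_comm, hcross]
      exact volumeForm_snoc_crossFieldArgs_ne_zero o E.orthonormal hZ (by omega) (by omega)
  · have hl : (l : ℕ) ≠ 0 := by rw [Fin.lt_def] at hkl; omega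
    by_cases hk : (k : ℕ) = 0
    · simp only [hk, hl, if_true, if_false, innerₛₗ_apply_apply]
      exact E.orthonormal.2 (by simp [Fin.ext_iff]; omega)
    · simp only [hk, hl, if_false, innerₛₗ_apply_apply]
      rw [hXk k hk, real_inner_comm, hcross]
      exact o.volumeForm.map_snoc_crossFieldArgs_of_ne E Z (by omega) (by omega) (by simp; omega)
        (by rw [Fin.lt_def] at hkl; simp; omega)
end

section
/- Let γ : ℝ → ℝ³ and X : ℝ → ℝ³ be differentiable, let I ⊆ ℝ be an interval and J ⊆ ℝ an interval containing 0, and define Z(t,u) = (γ′(t) + u X′(t)) × X(t), where × is the cross product in ℝ³. Assume Z(t,u) ≠ 0 for all (t,u) ∈ I × J. Then ∂/∂u of the normalized field Z/|Z| vanishes at every point of I × J if and only if γ′(t) · (X′(t) × X(t)) = 0 for every t ∈ I. -/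
open scoped RealInnerProductSpace

/-- The cross product of `ℝ³`, regarded as an operation on `EuclideanSpace ℝ (Fin 3)`. -/
noncomputable def cross3 (a b : EuclideanSpace ℝ (Fin 3)) : EuclideanSpace ℝ (Fin 3) :=
  (WithLp.equiv 2 (Fin 3 → ℝ)).symm
    (crossProduct ((WithLp.equiv 2 (Fin 3 → ℝ)) a) ((WithLp.equiv 2 (Fin 3 → ℝ)) b))

/-!
Along the ruling through `γ(t)`, `Z(t, s) = A + s B` with `A = γ' × X` and `B = X' × X`.
The derivative of `Z/|Z|` in `s` is `|Z|⁻³ (|Z|² B - ⟪Z, B⟫ Z)`, which vanishes exactly when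
`B` is parallel to `Z`, i.e. when `Z × B = 0`. But `Z × B = A × B = ⟪γ', X' × X⟫ X`, and
`X ≠ 0` wherever `Z ≠ 0`, so the condition is `⟪γ', X' × X⟫ = 0`, whatever `s` is.
-/

section Normalize

variable {E : Type*} [NormedAddCommGroup E] [InnerProductSpace ℝ E] {f : ℝ → E} {f' : E} {u : ℝ}

theorem HasDerivAt.norm (hf : HasDerivAt f f' u) (h0 : f u ≠ 0) :
    HasDerivAt (‖f ·‖) (⟪f u, f'⟫ / ‖f u‖) u := by
  have hn : ‖f u‖ ≠ 0 := norm_ne_zero_iff.2 h0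
  convert hf.norm_sq.sqrt (by positivity) using 1
  · simp only [Real.sqrt_sq (norm_nonneg _)]
  · rw [Real.sqrt_sq (norm_nonneg _)]
    field_simp

theorem HasDerivAt.norm_inv_smul_self (hf : HasDerivAt f f' u) (h0 : f u ≠ 0) :
    HasDerivAt (fun s => ‖f s‖⁻¹ • f s)
      ((‖f u‖ ^ 3)⁻¹ • (‖f u‖ ^ 2 • f' - ⟪f u, f'⟫ • f u)) u := by
  have hn : ‖f u‖ ≠ 0 := norm_ne_zero_iff.2 h0
  refine (((hf.norm h0).inv hn).smul hf).congr_deriv ?_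
  have h3 : (‖f u‖ ^ 3)⁻¹ * ‖f u‖ ^ 2 = ‖f u‖⁻¹ := by field_simp
  have h4 : -(⟪f u, f'⟫ / ‖f u‖) / ‖f u‖ ^ 2 = -((‖f u‖ ^ 3)⁻¹ * ⟪f u, f'⟫) := by
    field_simp
  rw [h4, Pi.inv_apply, neg_smul, smul_sub, smul_smul, smul_smul, h3]
  abel

theorem deriv_norm_inv_smul_self_eq_zero_iff (hf : HasDerivAt f f' u) (h0 : f u ≠ 0) :
    deriv (fun s => ‖f s‖⁻¹ • f s) u = 0 ↔ ‖f u‖ ^ 2 • f' = ⟪f u, f'⟫ • f u := by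
  rw [(hf.norm_inv_smul_self h0).deriv, smul_eq_zero, sub_eq_zero, or_iff_right]
  have : ‖f u‖ ≠ 0 := norm_ne_zero_iff.2 h0
  positivity

end Normalize

open Matrix

section Cross3

local notation "ℝ³" => EuclideanSpace ℝ (Fin 3)

@[simp] theorem ofLp_cross3 (a b : ℝ³) : (cross3 a b).ofLp = a.ofLp ⨯₃ b.ofLp := rfl

theorem real_inner_eq_dotProduct_ofLp (a b : ℝ³) : ⟪a, b⟫ = a.ofLp ⬝ᵥ b.ofLp := by
  rw [EuclideanSpace.inner_eq_star_dotProduct, star_trivial, dotProduct_comm]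

theorem cross3_add_left (a b c : ℝ³) : cross3 (a + b) c = cross3 a c + cross3 b c := by
  ext1; simp

theorem cross3_smul_left (r : ℝ) (a b : ℝ³) : cross3 (r • a) b = r • cross3 a b := by
  ext1; simp

theorem cross3_smul_right (r : ℝ) (a b : ℝ³) : cross3 a (r • b) = r • cross3 a b := by
  ext1; simp

theorem cross3_self (a : ℝ³) : cross3 a a = 0 := by
  ext1; simp

theorem cross3_zero_right (a : ℝ³) : cross3 a 0 = 0 := by
  ext1; simp

theorem cross3_cross3_self_left (a b : ℝ³) : cross3 a (cross3 a b) = ⟪a, b⟫ • a - ⟪a, a⟫ • b := by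
  apply WithLp.ofLp_injective 2
  simp only [ofLp_cross3, WithLp.ofLp_sub, WithLp.ofLp_smul, real_inner_eq_dotProduct_ofLp,
    cross_cross_eq_smul_sub_smul']

theorem cross3_cross3_cross3_right (a b c : ℝ³) :
    cross3 (cross3 a c) (cross3 b c) = ⟪a, cross3 b c⟫ • c := by
  ext1; simp [real_inner_eq_dotProduct_ofLp, cross_cross_eq_smul_sub_smul, dot_cross_self]

theorem cross3_eq_zero_iff {a : ℝ³} (ha : a ≠ 0) (b : ℝ³) :
    cross3 a b = 0 ↔ ‖a‖ ^ 2 • b = ⟪a, b⟫ • a := by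
  constructor
  · intro h
    have := cross3_cross3_self_left a b
    rw [h, cross3_zero_right, real_inner_self_eq_norm_sq] at this
    exact (sub_eq_zero.1 this.symm).symm
  · intro h
    have := congrArg (cross3 a) h
    rw [cross3_smul_right, cross3_smul_right, cross3_self, smul_zero, smul_eq_zero] at this
    exact this.resolve_left (by positivity)

theorem deriv_norm_inv_smul_cross3_add_smul_eq_zero_iff (a b c : ℝ³) (u : ℝ)
    (hz : cross3 (a + u • b) c ≠ 0) :
    deriv (fun s => ‖cross3 (a + s • b) c‖⁻¹ • cross3 (a + s • b) c) u = 0 ↔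
      ⟪a, cross3 b c⟫ = 0 := by
  have hc : c ≠ 0 := by
    rintro rfl
    exact hz (cross3_zero_right _)
  have hline : HasDerivAt (fun s => cross3 (a + s • b) c) (cross3 b c) u := by
    simp only [cross3_add_left, cross3_smul_left]
    simpa using ((hasDerivAt_id u).smul_const (cross3 b c)).const_add (cross3 a c)
  rw [deriv_norm_inv_smul_self_eq_zero_iff hline hz, ← cross3_eq_zero_iff hz, cross3_add_left,
    cross3_add_left, cross3_smul_left, cross3_smul_left, cross3_self, smul_zero, add_zero,
    cross3_cross3_cross3_right, smul_eq_zero, or_iff_left hc]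

end Cross3

theorem ruled_surface_flat_iff_classical_condition_general
    (γ X : ℝ → EuclideanSpace ℝ (Fin 3))
    (I J : Set ℝ) (hJ0 : (0 : ℝ) ∈ J)
    (Z : ℝ → ℝ → EuclideanSpace ℝ (Fin 3))
    (hZ : ∀ t u : ℝ, Z t u = cross3 (deriv γ t + u • deriv X t) (X t))
    (hZne : ∀ t ∈ I, ∀ u ∈ J, Z t u ≠ 0) :
    (∀ t ∈ I, ∀ u ∈ J, deriv (fun s : ℝ => ‖Z t s‖⁻¹ • Z t s) u = 0)
      ↔ (∀ t ∈ I, ⟪deriv γ t, cross3 (deriv X t) (X t)⟫ = 0) := by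
  have along_ruling : ∀ t ∈ I, ∀ u ∈ J, deriv (fun s : ℝ => ‖Z t s‖⁻¹ • Z t s) u = 0 ↔
      ⟪deriv γ t, cross3 (deriv X t) (X t)⟫ = 0 := by
    intro t ht u hu
    simp only [hZ] at hZne ⊢
    exact deriv_norm_inv_smul_cross3_add_smul_eq_zero_iff _ _ _ u (hZne t ht u hu)
  exact ⟨fun h t ht => (along_ruling t ht 0 hJ0).1 (h t ht 0 hJ0),
    fun h t ht u hu => (along_ruling t ht u hu).2 (h t ht)⟩

/-- Let `γ, X : ℝ → ℝ³` be differentiable, `I, J ⊆ ℝ` intervals with `0 ∈ J`, and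
`Z (t, u) = (γ′(t) + u X′(t)) × X(t)`, assumed nonzero on `I × J`.  Then `∂/∂u` of the
normalized field `Z/|Z|` vanishes on `I × J` if and only if
`γ′(t) · (X′(t) × X(t)) = 0` for every `t ∈ I`. -/
theorem ruled_surface_flat_iff_classical_condition
    (γ X : ℝ → EuclideanSpace ℝ (Fin 3))
    (hγ : Differentiable ℝ γ) (hX : Differentiable ℝ X)
    (I J : Set ℝ) (hI : I.OrdConnected) (hJ : J.OrdConnected) (hJ0 : (0 : ℝ) ∈ J)
    (Z : ℝ → ℝ → EuclideanSpace ℝ (Fin 3))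
    (hZ : ∀ t u : ℝ, Z t u = cross3 (deriv γ t + u • deriv X t) (X t))
    (hZne : ∀ t ∈ I, ∀ u ∈ J, Z t u ≠ 0) :
    (∀ t ∈ I, ∀ u ∈ J, deriv (fun s : ℝ => ‖Z t s‖⁻¹ • Z t s) u = 0)
      ↔ (∀ t ∈ I, ⟪deriv γ t, cross3 (deriv X t) (X t)⟫ = 0) :=
  ruled_surface_flat_iff_classical_condition_general γ X I J hJ0 Z hZ hZne
end
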